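/- Let u be strictly convex and continuous on B₂(0) ⊆ ℝⁿ, and u_k smooth strongly convex with u_k → u uniformly. Fix p ∈ B₁(0). Then for all small enough r > 0 and large enough k (depending on u, r, p), D^{u_k}_r(p) ⊆ S^u_{2r}(p) ⋐ B₁(0). -/

import Mathlib

open Metric Set Filter Topology

set_option maxHeartbeats 2000000

variable {n : ℕ}

/-- The Hessian matrix of a function at a point. -/
noncomputable def Hess (u : EuclideanSpace ℝ (Fin n) → ℝ)
    (x : EuclideanSpace ℝ (Fin n)) : Matrix (Fin n) (Fin n) ℝ :=
  Matrix.of fun i j =>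
    iteratedFDeriv ℝ 2 u x ![EuclideanSpace.single i 1, EuclideanSpace.single j 1]

/-- The subdifferential of `v` at `p`, with respect to the domain `B₂(0)`. -/
def subdiff (v : EuclideanSpace ℝ (Fin n) → ℝ) (p : EuclideanSpace ℝ (Fin n)) :
    Set (EuclideanSpace ℝ (Fin n)) :=
  {y | ∀ x ∈ ball (0 : EuclideanSpace ℝ (Fin n)) 2, v p + (inner ℝ (x - p) y : ℝ) ≤ v x}

/-- The outer section `S^v_s(p)` defined via the subdifferential. -/
def outerSection (v : EuclideanSpace ℝ (Fin n) → ℝ) (s : ℝ)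
    (p : EuclideanSpace ℝ (Fin n)) : Set (EuclideanSpace ℝ (Fin n)) :=
  {x ∈ ball (0 : EuclideanSpace ℝ (Fin n)) 1 |
    v x < v p + sSup ((fun y => (inner ℝ (x - p) y : ℝ)) '' subdiff v p) + s ^ 2}

section Aux

local notation "E" => EuclideanSpace ℝ (Fin n)

lemma aux_quad_nonneg {f : EuclideanSpace ℝ (Fin n) → ℝ} {z : E}
    (hpos : (Hess f z).PosDef) (v : E) :
    0 ≤ fderiv ℝ (fderiv ℝ f) z v v := by
  have hv : ∑ i, v i • EuclideanSpace.single i (1:ℝ) = v := by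
    have h := (EuclideanSpace.basisFun (Fin n) ℝ).sum_repr v
    simpa [EuclideanSpace.basisFun_repr, EuclideanSpace.basisFun_apply] using h
  obtain ⟨w, rfl⟩ : ∃ w : Fin n → ℝ, (∑ i, w i • EuclideanSpace.single i (1:ℝ)) = v :=
    ⟨fun i => v i, hv⟩
  by_cases hw : w = 0
  · simp [hw]
  · have h := hpos.dotProduct_mulVec_pos hw
    have key : dotProduct (star w) ((Hess f z).mulVec w)
        = fderiv ℝ (fderiv ℝ f) z (∑ i, w i • EuclideanSpace.single i (1:ℝ))
          (∑ i, w i • EuclideanSpace.single i (1:ℝ)) := by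
      simp only [dotProduct, Matrix.mulVec, Hess, Matrix.of_apply,
        iteratedFDeriv_two_apply, Matrix.cons_val_zero, Matrix.cons_val_one, Matrix.head_cons,
        map_sum, map_smul, ContinuousLinearMap.coe_sum', Finset.sum_apply,
        ContinuousLinearMap.coe_smul', Pi.smul_apply, smul_eq_mul, star_trivial,
        Pi.star_apply]
      simp_rw [Finset.mul_sum]
      conv_rhs => rw [Finset.sum_comm]
      exact Finset.sum_congr rfl fun i _ => Finset.sum_congr rfl fun j _ => by ring
    rw [key] at h
    exact h.le

lemma aux_convexOn {f : E → ℝ} (hsm : ContDiffOn ℝ (⊤ : ℕ∞) f (ball (0:E) 2))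
    (hpos : ∀ x ∈ ball (0:E) 2, (Hess f x).PosDef) :
    ConvexOn ℝ (ball (0:E) 2) f := by
  have hq : ∀ z ∈ ball (0:E) 2, ∀ v : E, 0 ≤ fderiv ℝ (fderiv ℝ f) z v v :=
    fun z hz v => aux_quad_nonneg (hpos z hz) v
  refine ⟨convex_ball _ _, fun x hx y hy a b ha hb hab => ?_⟩
  set v : E := y - x with hv
  set c : ℝ → E := fun t => x + t • v with hc
  have hmem : ∀ t ∈ Icc (0:ℝ) 1, c t ∈ ball (0:E) 2 := fun t ht =>
    (convex_ball (0:E) 2).add_smul_sub_mem hx hy ht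
  have hcont_c : Continuous c := by fun_prop
  have hderiv_c : ∀ t : ℝ, HasDerivAt c v t := by
    intro t
    simpa [one_smul, hc] using ((hasDerivAt_id t).smul_const v).const_add x
  have hg' : ∀ t ∈ interior (Icc (0:ℝ) 1),
      HasDerivWithinAt (fun t => f (c t)) ((fderiv ℝ f (c t)) v) (interior (Icc (0:ℝ) 1)) t := by
    intro t ht
    rw [interior_Icc] at ht
    have hct : c t ∈ ball (0:E) 2 := hmem t (Ioo_subset_Icc_self ht)
    have hfd : HasFDerivAt f (fderiv ℝ f (c t)) (c t) :=
      (((hsm.contDiffAt (isOpen_ball.mem_nhds hct)).differentiableAt (by simp))).hasFDerivAt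
    exact (hfd.comp_hasDerivAt t (hderiv_c t)).hasDerivWithinAt
  have hg'' : ∀ t ∈ interior (Icc (0:ℝ) 1),
      HasDerivWithinAt (fun t => (fderiv ℝ f (c t)) v)
        ((fderiv ℝ (fderiv ℝ f) (c t)) v v) (interior (Icc (0:ℝ) 1)) t := by
    intro t ht
    rw [interior_Icc] at ht
    have hct : c t ∈ ball (0:E) 2 := hmem t (Ioo_subset_Icc_self ht)
    have h1 : ContDiffAt ℝ 1 (fderiv ℝ f) (c t) :=
      (hsm.contDiffAt (isOpen_ball.mem_nhds hct)).fderiv_right (WithTop.coe_le_coe.2 le_top)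
    have hfd : HasFDerivAt (fderiv ℝ f) (fderiv ℝ (fderiv ℝ f) (c t)) (c t) :=
      (h1.differentiableAt one_ne_zero).hasFDerivAt
    have hcomp : HasDerivAt (fun t => fderiv ℝ f (c t))
        ((fderiv ℝ (fderiv ℝ f) (c t)) v) t := hfd.comp_hasDerivAt t (hderiv_c t)
    have := ((ContinuousLinearMap.apply ℝ ℝ v).hasFDerivAt).comp_hasDerivAt t hcomp
    exact this.hasDerivWithinAt
  have hgc : ContinuousOn (fun t => f (c t)) (Icc (0:ℝ) 1) :=
    hsm.continuousOn.comp hcont_c.continuousOn hmem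
  have hconv : ConvexOn ℝ (Icc (0:ℝ) 1) (fun t => f (c t)) := by
    refine convexOn_of_hasDerivWithinAt2_nonneg (convex_Icc 0 1) hgc hg' hg'' ?_
    intro t ht
    rw [interior_Icc] at ht
    exact hq (c t) (hmem t (Ioo_subset_Icc_self ht)) v
  have h01 : (0:ℝ) ∈ Icc (0:ℝ) 1 := by norm_num
  have h11 : (1:ℝ) ∈ Icc (0:ℝ) 1 := by norm_num
  have := hconv.2 h01 h11 ha hb hab
  simp only [smul_eq_mul, mul_zero, mul_one, zero_add] at this
  have hco : c b = a • x + b • y := by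
    rw [hc, hv]
    have : a = 1 - b := by linarith
    rw [this]
    module
  have hc0 : c 0 = x := by simp [hc]
  have hc1 : c 1 = y := by simp [hc, hv]
  rw [hco, hc0, hc1] at this
  simpa using this

lemma aux_inner_gradient_eq {f : E → ℝ} (x w : E) :
    (inner ℝ w (gradient f x) : ℝ) = fderiv ℝ f x w := by
  rw [real_inner_comm, gradient, InnerProductSpace.toDual_symm_apply]

lemma aux_grad_ineq {f : E → ℝ} (hconv : ConvexOn ℝ (ball (0:E) 2) f)
    (hsm : ContDiffOn ℝ (⊤ : ℕ∞) f (ball (0:E) 2))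
    {x z : E} (hx : x ∈ ball (0:E) 2) (hz : z ∈ ball (0:E) 2) :
    f x + (inner ℝ (z - x) (gradient f x) : ℝ) ≤ f z := by
  rw [aux_inner_gradient_eq]
  set A : ℝ →ᵃ[ℝ] E := AffineMap.lineMap x z with hA
  have hconv' : ConvexOn ℝ (A ⁻¹' ball (0:E) 2) (f ∘ A) := hconv.comp_affineMap A
  have h0 : (0:ℝ) ∈ A ⁻¹' ball (0:E) 2 := by
    simp [hA, AffineMap.lineMap_apply_zero, hx, Set.mem_preimage]
  have h1 : (1:ℝ) ∈ A ⁻¹' ball (0:E) 2 := by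
    simp [hA, AffineMap.lineMap_apply_one, hz, Set.mem_preimage]
  have hlin : ∀ t : ℝ, A t = x + t • (z - x) := by
    intro t
    simp [hA, AffineMap.lineMap_apply, vsub_eq_sub, vadd_eq_add]
    abel
  have hA0 : A (0:ℝ) = x := by simp [hA]
  have hderiv : HasDerivAt (fun t : ℝ => A t) (z - x) 0 := by
    have h1 : HasDerivAt (fun t : ℝ => x + t • (z - x)) (z - x) 0 := by
      simpa [one_smul] using ((hasDerivAt_id (0:ℝ)).smul_const (z - x)).const_add x
    exact h1.congr_of_eventuallyEq (Filter.Eventually.of_forall hlin)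
  have hfd : HasFDerivAt f (fderiv ℝ f x) (A (0:ℝ)) := by
    rw [hA0]
    exact ((hsm.contDiffAt (isOpen_ball.mem_nhds hx)).differentiableAt (by simp)).hasFDerivAt
  have hg : HasDerivAt (f ∘ A) ((fderiv ℝ f x) (z - x)) 0 :=
    hfd.comp_hasDerivAt 0 hderiv
  have hslope := hconv'.le_slope_of_hasDerivAt h0 h1 zero_lt_one hg
  rw [slope_def_field] at hslope
  simp only [Function.comp_apply] at hslope
  rw [show A (1:ℝ) = z by simp [hA], hA0] at hslope
  have : (fderiv ℝ f x) (z - x) ≤ f z - f x := by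
    simpa using hslope
  linarith

end Aux

local notation "E'" => EuclideanSpace ℝ (Fin n)

/-- for strictly convex `u` and smooth strongly convex `u_k → u` uniformly,
for all small `r` and large `k`, `D^{u_k}_r(p) ⊆ S^u_{2r}(p) ⋐ B₁(0)`. -/
theorem extrinsic_ball_in_section
    (u : EuclideanSpace ℝ (Fin n) → ℝ)
    (hu : StrictConvexOn ℝ (ball 0 2) u) (hc : ContinuousOn u (ball 0 2))
    (uk : ℕ → EuclideanSpace ℝ (Fin n) → ℝ)
    (hsm : ∀ k, ContDiffOn ℝ (⊤ : ℕ∞) (uk k) (ball 0 2))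
    (hstrong : ∀ k, ∀ x ∈ ball (0 : EuclideanSpace ℝ (Fin n)) 2, (Hess (uk k) x).PosDef)
    (hunif : TendstoUniformlyOn uk u atTop (ball 0 2))
    (p : EuclideanSpace ℝ (Fin n)) (hp : p ∈ ball (0 : EuclideanSpace ℝ (Fin n)) 1) :
    ∃ r₀ > 0, ∀ r : ℝ, 0 < r → r < r₀ → ∃ k₀ : ℕ, ∀ k ≥ k₀,
      ({x ∈ ball (0 : EuclideanSpace ℝ (Fin n)) 1 |
          (inner ℝ (x - p) (gradient (uk k) x - gradient (uk k) p) : ℝ) < r ^ 2}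
        ⊆ outerSection u (2 * r) p) ∧
      closure (outerSection u (2 * r) p) ⊆ ball (0 : EuclideanSpace ℝ (Fin n)) 1 := by
  have hp1 : ‖p‖ < 1 := mem_ball_zero_iff.1 hp
  have hp2 : p ∈ ball (0:E') 2 := mem_ball_zero_iff.2 (by linarith)
  have hsub12 : ball (0:E') 1 ⊆ ball (0:E') 2 := ball_subset_ball (by norm_num)
  have hball2 : ∀ x ∈ ball (0:E') 1, ‖x - p‖ ≤ 2 := by
    intro x hx
    have := mem_ball_zero_iff.1 hx
    calc ‖x - p‖ ≤ ‖x‖ + ‖p‖ := norm_sub_le x p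
    _ ≤ 2 := by linarith
  have hconv : ∀ k, ConvexOn ℝ (ball (0:E') 2) (uk k) :=
    fun k => aux_convexOn (hsm k) (hstrong k)
  have hgi : ∀ k, ∀ x ∈ ball (0:E') 2, ∀ z ∈ ball (0:E') 2,
      uk k x + (inner ℝ (z - x) (gradient (uk k) x) : ℝ) ≤ uk k z :=
    fun k x hx z hz => aux_grad_ineq (hconv k) (hsm k) hx hz
  -- maximum of u on a small closed ball around p
  have hcb : closedBall p (1/2) ⊆ ball (0:E') 2 := by
    intro q hq
    have hq' : ‖q - p‖ ≤ 1/2 := mem_closedBall_iff_norm.1 hq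
    have : ‖q‖ ≤ ‖q - p‖ + ‖p‖ := by
      calc ‖q‖ = ‖q - p + p‖ := by rw [sub_add_cancel]
      _ ≤ ‖q - p‖ + ‖p‖ := norm_add_le _ _
    exact mem_ball_zero_iff.2 (by linarith)
  obtain ⟨m, hm, hmax⟩ := (isCompact_closedBall p (1/2)).exists_isMaxOn
    ⟨p, mem_closedBall_self (by norm_num)⟩ (hc.mono hcb)
  set C := u m with hC
  have hpC : u p ≤ C := hmax (mem_closedBall_self (by norm_num))
  -- bound on the subdifferential
  have hKbd : ∀ y ∈ subdiff u p, ‖y‖ ≤ 2 * (C - u p) := by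
    intro y hy
    by_cases hy0 : y = 0
    · simp [hy0]; linarith
    · have hyn : (0:ℝ) < ‖y‖ := norm_pos_iff.2 hy0
      set q : E' := p + (2⁻¹ * ‖y‖⁻¹) • y with hqdef
      have hqcb : q ∈ closedBall p (1/2) := by
        rw [mem_closedBall_iff_norm]
        rw [hqdef, add_sub_cancel_left, norm_smul, Real.norm_eq_abs,
          abs_of_nonneg (by positivity), mul_assoc, inv_mul_cancel₀ hyn.ne']
        norm_num
      have hsub := hy q (hcb hqcb)
      have hin : (inner ℝ (q - p) y : ℝ) = 2⁻¹ * ‖y‖ := by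
        rw [hqdef, add_sub_cancel_left, real_inner_smul_left,
          real_inner_self_eq_norm_mul_norm]
        field_simp
      rw [hin] at hsub
      have hqC : u q ≤ C := hmax hqcb
      nlinarith
  have hCpos : 0 ≤ 2 * (C - u p) := by linarith
  -- bddAbove of the images
  have hbdd : ∀ v : E', BddAbove ((fun y => (inner ℝ v y : ℝ)) '' subdiff u p) := by
    intro v
    refine ⟨‖v‖ * (2 * (C - u p)), ?_⟩
    rintro _ ⟨y, hy, rfl⟩
    calc (inner ℝ v y : ℝ) ≤ ‖v‖ * ‖y‖ := real_inner_le_norm v y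
    _ ≤ ‖v‖ * (2 * (C - u p)) := mul_le_mul_of_nonneg_left (hKbd y hy) (norm_nonneg v)
  set hfun : E' → ℝ := fun v => sSup ((fun y => (inner ℝ v y : ℝ)) '' subdiff u p) with hfdef
  have hsupport : ∀ v : E', ∀ y ∈ subdiff u p, (inner ℝ v y : ℝ) ≤ hfun v :=
    fun v y hy => le_csSup (hbdd v) ⟨y, hy, rfl⟩
  -- gradients at p
  set g : ℕ → E' := fun k => gradient (uk k) p with hgdef
  have hsubk : ∀ k, ∀ x ∈ ball (0:E') 2, uk k p + (inner ℝ (x - p) (g k) : ℝ) ≤ uk k x :=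
    fun k x hx => hgi k p hp2 x hx
  have herr1 : ∀ᶠ k in atTop, ∀ x ∈ ball (0:E') 2, dist (u x) (uk k x) < 1 :=
    Metric.tendstoUniformlyOn_iff.1 hunif 1 one_pos
  set R₂ : ℝ := 2 * (C - u p + 2) with hR₂
  have hgbd : ∀ k, (∀ x ∈ ball (0:E') 2, dist (u x) (uk k x) < 1) → ‖g k‖ ≤ R₂ := by
    intro k hk
    by_cases hy0 : g k = 0
    · rw [hy0]; simp [hR₂]; linarith
    · have hyn : (0:ℝ) < ‖g k‖ := norm_pos_iff.2 hy0
      set q : E' := p + (2⁻¹ * ‖g k‖⁻¹) • (g k) with hqdef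
      have hqcb : q ∈ closedBall p (1/2) := by
        rw [mem_closedBall_iff_norm]
        rw [hqdef, add_sub_cancel_left, norm_smul, Real.norm_eq_abs,
          abs_of_nonneg (by positivity), mul_assoc, inv_mul_cancel₀ hyn.ne']
        norm_num
      have hq2 : q ∈ ball (0:E') 2 := hcb hqcb
      have hsub := hsubk k q hq2
      have hin : (inner ℝ (q - p) (g k) : ℝ) = 2⁻¹ * ‖g k‖ := by
        rw [hqdef, add_sub_cancel_left, real_inner_smul_left,
          real_inner_self_eq_norm_mul_norm]
        field_simp
      rw [hin] at hsub
      have h1 : dist (u q) (uk k q) < 1 := hk q hq2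
      have h2 : dist (u p) (uk k p) < 1 := hk p hp2
      rw [Real.dist_eq, abs_lt] at h1 h2
      have hqC : u q ≤ C := hmax hqcb
      rw [hR₂]
      nlinarith
  -- limits of subsequences of gradients are subgradients
  have hlimK : ∀ (m' : ℕ → ℕ), Tendsto m' atTop atTop → ∀ yL : E',
      Tendsto (fun j => g (m' j)) atTop (𝓝 yL) → yL ∈ subdiff u p := by
    intro m' hm' yL hy x hx
    have h1 : Tendsto (fun j => uk (m' j) p + (inner ℝ (x - p) (g (m' j)) : ℝ)) atTop
        (𝓝 (u p + (inner ℝ (x - p) yL : ℝ))) :=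
      ((hunif.tendsto_at hp2).comp hm').add (Filter.Tendsto.inner tendsto_const_nhds hy)
    have h2 : Tendsto (fun j => uk (m' j) x) atTop (𝓝 (u x)) :=
      (hunif.tendsto_at hx).comp hm'
    exact le_of_tendsto_of_tendsto' h1 h2 fun j => hsubk (m' j) x hx
  -- nonemptiness of the subdifferential
  obtain ⟨k₁, hk₁⟩ := eventually_atTop.1 herr1
  have hmem1 : ∀ j : ℕ, g (k₁ + j) ∈ closedBall (0:E') R₂ := fun j =>
    mem_closedBall_zero_iff.2 (hgbd (k₁ + j) (hk₁ (k₁ + j) (Nat.le_add_right _ _)))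
  obtain ⟨y₀, -, φ₀, hφ₀, hyt₀⟩ :=
    tendsto_subseq_of_bounded (isBounded_closedBall (x := (0:E')) (r := R₂)) hmem1
  have hKne : (subdiff u p).Nonempty := by
    refine ⟨y₀, hlimK (fun j => k₁ + φ₀ j)
      (tendsto_atTop_mono (fun j => Nat.le_add_left (φ₀ j) k₁) hφ₀.tendsto_atTop) y₀ hyt₀⟩
  -- continuity of the support function
  have hlip : ∀ v w : E', hfun v ≤ hfun w + (2 * (C - u p)) * ‖v - w‖ := by
    intro v w
    refine csSup_le (hKne.image _) ?_
    rintro _ ⟨y, hy, rfl⟩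
    show (inner ℝ v y : ℝ) ≤ hfun w + 2 * (C - u p) * ‖v - w‖
    have h1 : (inner ℝ (v - w) y : ℝ) ≤ ‖v - w‖ * ‖y‖ := real_inner_le_norm _ _
    have h2 : ‖v - w‖ * ‖y‖ ≤ ‖v - w‖ * (2 * (C - u p)) :=
      mul_le_mul_of_nonneg_left (hKbd y hy) (norm_nonneg _)
    have h3 : (inner ℝ v y : ℝ) = inner ℝ w y + (inner ℝ (v - w) y : ℝ) := by
      rw [inner_sub_left]; ring
    have h4 : (inner ℝ w y : ℝ) ≤ hfun w := hsupport w y hy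
    rw [h3]
    nlinarith [norm_nonneg (v - w)]
  have hcont_h : Continuous hfun := by
    refine (LipschitzWith.of_dist_le_mul (K := (2 * (C - u p)).toNNReal) ?_).continuous
    intro v w
    rw [Real.dist_eq, dist_eq_norm]
    have l1 := hlip v w
    have l2 := hlip w v
    rw [show ‖w - v‖ = ‖v - w‖ by rw [norm_sub_rev]] at l2
    rw [abs_le]
    have : ((2 * (C - u p)).toNNReal : ℝ) = 2 * (C - u p) := Real.coe_toNNReal _ hCpos
    rw [this]
    constructor <;> nlinarith
  -- Claim A : approximate support bound for gradients
  have hclaim : ∀ δ : ℝ, 0 < δ → ∀ᶠ k in atTop, ∀ v : E', ‖v‖ ≤ 2 →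
      (inner ℝ v (g k) : ℝ) ≤ hfun v + δ := by
    intro δ hδ
    by_contra hcon
    rw [Filter.not_eventually] at hcon
    have hcon' : ∃ᶠ k in atTop, (∃ v : E', ‖v‖ ≤ 2 ∧ hfun v + δ < inner ℝ v (g k)) ∧
        (∀ x ∈ ball (0:E') 2, dist (u x) (uk k x) < 1) := by
      refine (hcon.mono ?_).and_eventually herr1
      intro k hk
      push_neg at hk
      obtain ⟨v, hv1, hv2⟩ := hk
      exact ⟨v, hv1, hv2⟩
    obtain ⟨φ, hφ, hP⟩ := extraction_of_frequently_atTop hcon'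
    have hmem2 : ∀ j, g (φ j) ∈ closedBall (0:E') R₂ := fun j =>
      mem_closedBall_zero_iff.2 (hgbd (φ j) (hP j).2)
    obtain ⟨yL, -, ψ, hψ, hyt⟩ :=
      tendsto_subseq_of_bounded (isBounded_closedBall (x := (0:E')) (r := R₂)) hmem2
    have hyK : yL ∈ subdiff u p :=
      hlimK (fun j => φ (ψ j)) (hφ.comp hψ).tendsto_atTop yL hyt
    have hlim0 : Tendsto (fun j => ‖g (φ (ψ j)) - yL‖) atTop (𝓝 0) :=
      tendsto_iff_norm_sub_tendsto_zero.1 hyt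
    obtain ⟨j, hj⟩ := (Metric.tendsto_nhds.1 hlim0 (δ/2) (by positivity)).exists
    rw [Real.dist_eq, sub_zero, abs_of_nonneg (norm_nonneg _)] at hj
    obtain ⟨v, hv2, hvlt⟩ := (hP (ψ j)).1
    have h1 : (inner ℝ v (g (φ (ψ j))) : ℝ) - inner ℝ v yL = inner ℝ v (g (φ (ψ j)) - yL) := by
      rw [inner_sub_right]
    have h2 : (inner ℝ v (g (φ (ψ j)) - yL) : ℝ) ≤ ‖v‖ * ‖g (φ (ψ j)) - yL‖ :=
      real_inner_le_norm _ _
    have h3 : ‖v‖ * ‖g (φ (ψ j)) - yL‖ ≤ 2 * ‖g (φ (ψ j)) - yL‖ :=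
      mul_le_mul_of_nonneg_right hv2 (norm_nonneg _)
    have h5 : (inner ℝ v yL : ℝ) ≤ hfun v := hsupport v yL hyK
    linarith
  -- strict separation
  have hsep : ∀ x ∈ ball (0:E') 2, x ≠ p → u p + hfun (x - p) < u x := by
    intro x hx hxp
    have hmid : (1/2 : ℝ) • x + (1/2 : ℝ) • p ∈ ball (0:E') 2 :=
      (convex_ball (0:E') 2) hx hp2 (by norm_num) (by norm_num) (by norm_num)
    have hstrict : u ((1/2:ℝ) • x + (1/2:ℝ) • p) < (1/2:ℝ) * u x + (1/2:ℝ) * u p :=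
      hu.2 hx hp2 hxp (by norm_num) (by norm_num) (by norm_num)
    have hub : hfun (x - p) ≤ 2 * (u ((1/2:ℝ) • x + (1/2:ℝ) • p) - u p) := by
      refine csSup_le (hKne.image _) ?_
      rintro _ ⟨y, hy, rfl⟩
      show (inner ℝ (x - p) y : ℝ) ≤ 2 * (u ((1/2:ℝ) • x + (1/2:ℝ) • p) - u p)
      have hsubm := hy _ hmid
      have hin : (inner ℝ ((1/2:ℝ) • x + (1/2:ℝ) • p - p) y : ℝ)
          = (1/2 : ℝ) * inner ℝ (x - p) y := by
        rw [show (1/2:ℝ) • x + (1/2:ℝ) • p - p = (1/2:ℝ) • (x - p) by module,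
          real_inner_smul_left]
      rw [hin] at hsubm
      linarith
    linarith
  -- the closed section sets
  have hTclosed : ∀ s : ℝ,
      IsClosed {x ∈ closedBall (0:E') 1 | u x ≤ u p + hfun (x - p) + s^2} := by
    intro s
    have hcb1 : closedBall (0:E') 1 ⊆ ball (0:E') 2 := closedBall_subset_ball one_lt_two
    have hG : ContinuousOn (fun x : E' => u x - (u p + hfun (x - p) + s^2))
        (closedBall (0:E') 1) := by
      refine ContinuousOn.sub (hc.mono hcb1) (Continuous.continuousOn ?_)
      exact (continuous_const.add (hcont_h.comp (continuous_sub_right p))).add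
        continuous_const
    have := hG.preimage_isClosed_of_isClosed isClosed_closedBall (isClosed_Iic (a := (0:ℝ)))
    convert this using 1
    ext x
    simp only [mem_setOf_eq, mem_inter_iff, mem_preimage, mem_Iic]
    constructor
    · rintro ⟨h1, h2⟩; exact ⟨h1, by linarith⟩
    · rintro ⟨h1, h2⟩; exact ⟨h1, by linarith⟩
  have hSsubT : ∀ s : ℝ, closure (outerSection u s p) ⊆
      {x ∈ closedBall (0:E') 1 | u x ≤ u p + hfun (x - p) + s^2} := by
    intro s
    refine closure_minimal ?_ (hTclosed s)
    rintro x ⟨hx1, hx2⟩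
    exact ⟨ball_subset_closedBall hx1, hx2.le⟩
  -- good radius
  have hs₀ : ∃ s₀ : ℝ, 0 < s₀ ∧ closure (outerSection u s₀ p) ⊆ ball (0:E') 1 := by
    by_contra hcon
    push_neg at hcon
    have hcon' : ∀ j : ℕ, ∃ x, x ∈ closure (outerSection u (1/((j:ℝ)+1)) p) ∧ x ∉ ball (0:E') 1 := by
      intro j
      have := hcon (1/((j:ℝ)+1)) (by positivity)
      rwa [Set.not_subset] at this
    choose x hx1 hx2 using hcon'
    have hx1' : ∀ j : ℕ, x j ∈ {x ∈ closedBall (0:E') 1 |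
        u x ≤ u p + hfun (x - p) + (1/((j:ℝ)+1))^2} := fun j => hSsubT _ (hx1 j)
    have hxnorm : ∀ j, ‖x j‖ = 1 := by
      intro j
      refine le_antisymm (mem_closedBall_zero_iff.1 (hx1' j).1) ?_
      by_contra hlt
      push_neg at hlt
      exact hx2 j (mem_ball_zero_iff.2 hlt)
    obtain ⟨xL, -, φ, hφ, hxt⟩ :=
      tendsto_subseq_of_bounded (isBounded_closedBall (x := (0:E')) (r := 1))
        (fun j => (hx1' j).1)
    have hxnL : ‖xL‖ = 1 := by
      have h1 : Tendsto (fun j => ‖x (φ j)‖) atTop (𝓝 ‖xL‖) :=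
        (continuous_norm.tendsto xL).comp hxt
      have h2 : Tendsto (fun j => ‖x (φ j)‖) atTop (𝓝 1) := by
        simp_rw [hxnorm]; exact tendsto_const_nhds
      exact tendsto_nhds_unique h1 h2
    have hxL2 : xL ∈ ball (0:E') 2 := mem_ball_zero_iff.2 (by rw [hxnL]; norm_num)
    have hxLp : xL ≠ p := by
      intro h
      rw [h] at hxnL
      linarith
    have hL : Tendsto (fun j => u (x (φ j))) atTop (𝓝 (u xL)) :=
      ((hc.continuousAt (isOpen_ball.mem_nhds hxL2)).tendsto).comp hxt
    have hR : Tendsto (fun j => u p + hfun (x (φ j) - p) + (1/((φ j : ℝ)+1))^2) atTop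
        (𝓝 (u p + hfun (xL - p) + 0)) := by
      refine Filter.Tendsto.add (Filter.Tendsto.add tendsto_const_nhds ?_) ?_
      · exact ((hcont_h.tendsto _).comp ((hxt.sub tendsto_const_nhds)))
      · have h0 : Tendsto (fun j : ℕ => 1/((j:ℝ)+1)) atTop (𝓝 0) :=
          tendsto_one_div_add_atTop_nhds_zero_nat
        have := (h0.comp hφ.tendsto_atTop).pow 2
        simpa using this
    have hle : u xL ≤ u p + hfun (xL - p) + 0 :=
      le_of_tendsto_of_tendsto' hL hR fun j => (hx1' (φ j)).2
    rw [add_zero] at hle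
    exact absurd hle (not_le.2 (hsep xL hxL2 hxLp))
  obtain ⟨s₀, hs₀pos, hs₀sub⟩ := hs₀
  refine ⟨s₀/2, by positivity, ?_⟩
  intro r hr hrs
  have hmono : outerSection u (2*r) p ⊆ outerSection u s₀ p := by
    rintro x ⟨hx1, hx2⟩
    refine ⟨hx1, hx2.trans_le ?_⟩
    have : (2*r)^2 ≤ s₀^2 := by nlinarith
    linarith
  have hclos2 : closure (outerSection u (2*r) p) ⊆ ball (0:E') 1 :=
    (closure_mono hmono).trans hs₀sub
  have hev := (Metric.tendstoUniformlyOn_iff.1 hunif (r^2/2) (by positivity)).and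
    (hclaim (r^2) (by positivity))
  obtain ⟨k₀, hk₀⟩ := eventually_atTop.1 hev
  refine ⟨k₀, fun k hk => ⟨?_, hclos2⟩⟩
  rintro x ⟨hx1, hx2⟩
  have hx2' : x ∈ ball (0:E') 2 := hsub12 hx1
  obtain ⟨herr, hcl⟩ := hk₀ k hk
  -- gradient inequality at x
  have e1 : uk k x + (inner ℝ (p - x) (gradient (uk k) x) : ℝ) ≤ uk k p :=
    hgi k x hx2' p hp2
  have e1' : uk k x ≤ uk k p + (inner ℝ (x - p) (gradient (uk k) x) : ℝ) := by
    have : (inner ℝ (p - x) (gradient (uk k) x) : ℝ)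
        = -(inner ℝ (x - p) (gradient (uk k) x) : ℝ) := by
      rw [show p - x = -(x - p) by abel, inner_neg_left]
    linarith [e1, this.symm.le]
  have e2 : (inner ℝ (x - p) (gradient (uk k) x) : ℝ)
      = (inner ℝ (x - p) (g k) : ℝ) + (inner ℝ (x - p) (gradient (uk k) x - gradient (uk k) p) : ℝ) := by
    rw [inner_sub_right, hgdef]; ring
  have e3 : (inner ℝ (x - p) (g k) : ℝ) ≤ hfun (x - p) + r^2 := hcl (x - p) (hball2 x hx1)
  have e4 : dist (u x) (uk k x) < r^2/2 := herr x hx2'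
  have e5 : dist (u p) (uk k p) < r^2/2 := herr p hp2
  rw [Real.dist_eq, abs_lt] at e4 e5
  refine ⟨hx1, ?_⟩
  have hfin : u x < u p + hfun (x - p) + (2*r)^2 := by nlinarith
  exact hfin
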